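/- Let ω, ω̂ ≥ 0, M, M̂ > 0, η, η̂ ∈ (0,1], and let u : S₂ → ℝ satisfy u(ρ_e) = 0 and u(ρ_g) ≠ 0 (assumption H). Then the set of equilibria of the coupled system, i.e., pairs (ρ, ρ̂) ∈ S₂ × S₂ satisfying G_{η,M}(ρ) = 0, G_{η̂,M̂}(ρ̂) = 0, L^{u(ρ̂)}_{ω,M}(ρ) = 0, and L^{u(ρ̂)}_{ω̂,M̂}(ρ̂) + G_{η̂,M̂}(ρ̂)(√(ηM)Tr(σzρ) − √(η̂M̂)Tr(σzρ̂)) = 0, is exactly {(ρ_e, ρ_e), (ρ_g, ρ_e)}, where ρ_g := diag(1,0) and ρ_e := diag(0,1). -/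
import Mathlib

open Matrix Complex
open scoped ComplexOrder

/-- Pauli matrix σy. -/
noncomputable def sy : Matrix (Fin 2) (Fin 2) ℂ := !![0, -Complex.I; Complex.I, 0]
/-- Pauli matrix σz. -/
noncomputable def sz : Matrix (Fin 2) (Fin 2) ℂ := !![1, 0; 0, -1]

/-- The set of 2×2 density matrices. -/
def S2 : Set (Matrix (Fin 2) (Fin 2) ℂ) :=
  {ρ | ρᴴ = ρ ∧ ρ.trace = 1 ∧ ρ.PosSemidef}

/-- The drift operator L^u_{ω,M}(ρ) = −(i/2)[ωσz + uσy, ρ] + (M/4)(σzρσz − ρ). -/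
noncomputable def Lop (ω u M : ℝ) (ρ : Matrix (Fin 2) (Fin 2) ℂ) : Matrix (Fin 2) (Fin 2) ℂ :=
  (-(Complex.I) / 2) • (((ω : ℂ) • sz + (u : ℂ) • sy) * ρ - ρ * ((ω : ℂ) • sz + (u : ℂ) • sy))
    + ((M : ℂ) / 4) • (sz * ρ * sz - ρ)

/-- The diffusion operator G_{η,M}(ρ) = (√(ηM)/2)(σzρ + ρσz − 2Tr(σzρ)ρ). -/
noncomputable def Gop (η M : ℝ) (ρ : Matrix (Fin 2) (Fin 2) ℂ) : Matrix (Fin 2) (Fin 2) ℂ :=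
  ((Real.sqrt (η * M) : ℂ) / 2) • (sz * ρ + ρ * sz - (2 * (sz * ρ).trace) • ρ)

/-- The ground state ρ_g = diag(1,0). -/
noncomputable def rhoG : Matrix (Fin 2) (Fin 2) ℂ := !![1, 0; 0, 0]
/-- The excited state ρ_e = diag(0,1). -/
noncomputable def rhoE : Matrix (Fin 2) (Fin 2) ℂ := !![0, 0; 0, 1]

lemma gbracket_zero (ρ : Matrix (Fin 2) (Fin 2) ℂ) (hherm : ρᴴ = ρ) (htr : ρ.trace = 1)
    (h : sz * ρ + ρ * sz - (2 * (sz * ρ).trace) • ρ = 0) : ρ = rhoG ∨ ρ = rhoE := by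
  have e00 := congrFun (congrFun h 0) 0
  have e01 := congrFun (congrFun h 0) 1
  have htr' : ρ 0 0 + ρ 1 1 = 1 := by simpa [Matrix.trace, Matrix.diag, Fin.sum_univ_two] using htr
  simp [Matrix.add_apply, Matrix.sub_apply, Matrix.smul_apply, Matrix.mul_apply,
    Matrix.trace, Matrix.diag, Fin.sum_univ_two, sz, Matrix.zero_apply, Matrix.vecMul,
    dotProduct] at e00 e01
  have ha : ρ 0 0 = 0 ∨ ρ 0 0 = 1 := by
    have : ρ 0 0 * (1 - ρ 0 0) = 0 := by
      have hd : ρ 1 1 = 1 - ρ 0 0 := by linear_combination htr'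
      linear_combination (e00 / 4) - (ρ 0 0 / 2) * hd
    rcases mul_eq_zero.1 this with h1 | h1
    · exact Or.inl h1
    · exact Or.inr (by linear_combination -h1)
  rcases ha with ha | ha
  · right
    have hd : ρ 1 1 = 1 := by linear_combination htr' - ha
    have hb : ρ 0 1 = 0 := by
      rcases e01 with h1 | h1
      · rw [ha, hd] at h1; norm_num at h1
      · exact h1
    have hc : ρ 1 0 = 0 := by
      have := congrFun (congrFun hherm 1) 0
      simp [Matrix.conjTranspose_apply, hb] at this
      simpa using this.symm
    ext i j; fin_cases i <;> fin_cases j <;> simp [rhoE, ha, hd, hb, hc]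
  · left
    have hd : ρ 1 1 = 0 := by linear_combination htr' - ha
    have hb : ρ 0 1 = 0 := by
      rcases e01 with h1 | h1
      · rw [ha, hd] at h1; norm_num at h1
      · exact h1
    have hc : ρ 1 0 = 0 := by
      have := congrFun (congrFun hherm 1) 0
      simp [Matrix.conjTranspose_apply, hb] at this
      simpa using this.symm
    ext i j; fin_cases i <;> fin_cases j <;> simp [rhoG, ha, hd, hb, hc]

lemma gop_zero_cases {η M : ℝ} (hη : 0 < η) (hM : 0 < M) (ρ : Matrix (Fin 2) (Fin 2) ℂ)
    (hherm : ρᴴ = ρ) (htr : ρ.trace = 1) (h : Gop η M ρ = 0) : ρ = rhoG ∨ ρ = rhoE := by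
  have hc : ((Real.sqrt (η * M) : ℂ) / 2) ≠ 0 := by
    apply div_ne_zero _ two_ne_zero
    exact_mod_cast Complex.ofReal_ne_zero.mpr (Real.sqrt_pos.mpr (mul_pos hη hM)).ne'
  unfold Gop at h
  exact gbracket_zero ρ hherm htr ((smul_eq_zero.mp h).resolve_left hc)

lemma rhoE_mem : rhoE ∈ S2 := by
  refine ⟨by ext i j; fin_cases i <;> fin_cases j <;> simp [rhoE],
    by simp [rhoE, Matrix.trace, Matrix.diag, Fin.sum_univ_two], ?_⟩
  have : rhoE = Matrix.diagonal ![0, 1] := by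
    ext i j; fin_cases i <;> fin_cases j <;> simp [rhoE, Matrix.diagonal]
  rw [this]
  refine Matrix.posSemidef_diagonal_iff.mpr fun i => ?_
  fin_cases i <;> simp

lemma rhoG_mem : rhoG ∈ S2 := by
  refine ⟨by ext i j; fin_cases i <;> fin_cases j <;> simp [rhoG],
    by simp [rhoG, Matrix.trace, Matrix.diag, Fin.sum_univ_two], ?_⟩
  have : rhoG = Matrix.diagonal ![1, 0] := by
    ext i j; fin_cases i <;> fin_cases j <;> simp [rhoG, Matrix.diagonal]
  rw [this]
  refine Matrix.posSemidef_diagonal_iff.mpr fun i => ?_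
  fin_cases i <;> simp

lemma gop_rhoE (η M : ℝ) : Gop η M rhoE = 0 := by
  unfold Gop
  have : sz * rhoE + rhoE * sz - (2 * (sz * rhoE).trace) • rhoE = 0 := by
    ext i j; fin_cases i <;> fin_cases j <;>
      simp [sz, rhoE, Matrix.mul_apply, Matrix.trace, Matrix.diag, Fin.sum_univ_two,
        Matrix.vecMul, dotProduct] <;> ring
  rw [this, smul_zero]

lemma gop_rhoG (η M : ℝ) : Gop η M rhoG = 0 := by
  unfold Gop
  have : sz * rhoG + rhoG * sz - (2 * (sz * rhoG).trace) • rhoG = 0 := by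
    ext i j; fin_cases i <;> fin_cases j <;>
      simp [sz, rhoG, Matrix.mul_apply, Matrix.trace, Matrix.diag, Fin.sum_univ_two,
        Matrix.vecMul, dotProduct] <;> ring
  rw [this, smul_zero]

lemma lop_rhoE (ω M : ℝ) : Lop ω 0 M rhoE = 0 := by
  unfold Lop
  ext i j; fin_cases i <;> fin_cases j <;>
    simp [sz, sy, rhoE, Matrix.mul_apply, Fin.sum_univ_two, Matrix.vecMul,
      dotProduct, Matrix.add_apply, Matrix.sub_apply, Matrix.smul_apply] <;> ring

lemma lop_rhoG (ω M : ℝ) : Lop ω 0 M rhoG = 0 := by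
  unfold Lop
  ext i j; fin_cases i <;> fin_cases j <;>
    simp [sz, sy, rhoG, Matrix.mul_apply, Fin.sum_univ_two, Matrix.vecMul,
      dotProduct, Matrix.add_apply, Matrix.sub_apply, Matrix.smul_apply] <;> ring

lemma lop_rhoG_ne {ω u M : ℝ} (hu : u ≠ 0) : Lop ω u M rhoG ≠ 0 := by
  intro h
  have := congrFun (congrFun h 0) 1
  simp [Lop, sz, sy, rhoG, Matrix.mul_apply, Fin.sum_univ_two, Matrix.vecMul,
    dotProduct, Matrix.add_apply, Matrix.sub_apply, Matrix.smul_apply,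
    Complex.ext_iff] at this
  apply hu
  rcases this with ⟨h1, h2⟩
  nlinarith [Complex.I_re, Complex.I_im]

theorem equilibria_set_under_H (ω ω' M M' η η' : ℝ)
    (hω : 0 ≤ ω) (hω' : 0 ≤ ω') (hM : 0 < M) (hM' : 0 < M')
    (hη : η ∈ Set.Ioc (0 : ℝ) 1) (hη' : η' ∈ Set.Ioc (0 : ℝ) 1)
    (u : Matrix (Fin 2) (Fin 2) ℂ → ℝ)
    (hue : u rhoE = 0) (hug : u rhoG ≠ 0) :
    {p : Matrix (Fin 2) (Fin 2) ℂ × Matrix (Fin 2) (Fin 2) ℂ |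
        p.1 ∈ S2 ∧ p.2 ∈ S2 ∧
        Gop η M p.1 = 0 ∧ Gop η' M' p.2 = 0 ∧ Lop ω (u p.2) M p.1 = 0 ∧
        Lop ω' (u p.2) M' p.2 +
          (((Real.sqrt (η * M) : ℂ)) * (sz * p.1).trace
            - ((Real.sqrt (η' * M') : ℂ)) * (sz * p.2).trace) • Gop η' M' p.2 = 0}
      = {(rhoE, rhoE), (rhoG, rhoE)} := by
  ext ⟨ρ, ρ'⟩
  simp only [Set.mem_setOf_eq, Set.mem_insert_iff, Set.mem_singleton_iff, Prod.mk.injEq]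
  constructor
  · rintro ⟨h1, h2, hG1, hG2, hL1, hL2⟩
    obtain ⟨hh2, ht2, -⟩ := h2
    obtain ⟨hh1, ht1, -⟩ := h1
    have hρ' : ρ' = rhoG ∨ ρ' = rhoE := gop_zero_cases hη'.1 hM' ρ' hh2 ht2 hG2
    have hρ : ρ = rhoG ∨ ρ = rhoE := gop_zero_cases hη.1 hM ρ hh1 ht1 hG1
    rcases hρ' with hρ' | hρ'
    · exfalso
      subst hρ'
      rw [hG2, smul_zero, add_zero] at hL2
      exact lop_rhoG_ne hug hL2
    · subst hρ'
      rcases hρ with hρ | hρ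
      · exact Or.inr ⟨hρ, rfl⟩
      · exact Or.inl ⟨hρ, rfl⟩
  · rintro (⟨rfl, rfl⟩ | ⟨rfl, rfl⟩)
    · refine ⟨rhoE_mem, rhoE_mem, gop_rhoE _ _, gop_rhoE _ _, ?_, ?_⟩
      · rw [hue]; exact lop_rhoE _ _
      · rw [hue, gop_rhoE, smul_zero, add_zero]; exact lop_rhoE _ _
    · refine ⟨rhoG_mem, rhoE_mem, gop_rhoG _ _, gop_rhoE _ _, ?_, ?_⟩
      · rw [hue]; exact lop_rhoG _ _
      · rw [hue, gop_rhoE, smul_zero, add_zero]; exact lop_rhoE _ _
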